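/- arXiv:2305.04068 — 5 statements merged into one kernel-verified Lean document; each statement's English description precedes it below -/
import Mathlib

section
/- Let μ > 0, α > 0 with 1 - 4μα ≥ 0, and let f solve the damped oscillator ODE μ f'' + f' + α f = 0 with f(0) = 0 and f'(0) = v. Then for all t ≥ 0, |f(t)| ≤ 4 μ |v| e^{-α t}. -/
/-! With `a ≤ b` the real roots of `μ x² + x + α`, the equation factors as
`(D - b)(D - a) f = 0`, so `g = f' - a f` solves `g' = b g`, i.e. `g = v e^{b t}`.
Then `F = e^{-a t} f` has `|F'| = |v| e^{(b - a) t} ≤ |v| e^{(c - a) t}` with `c = -α`,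
and comparison with `|v| e^{(c - a) t} / (c - a)` gives `|f t| ≤ |v| e^{-α t} / (-α - a)`.
Finally `-α - a ≥ 1 / (4 μ)` because `a ≤ -1 / (2 μ)` and `α ≤ 1 / (4 μ)`. -/

open Real Set

lemma hasDerivAt_exp_mul_mul {g : ℝ → ℝ} {g' r x : ℝ} (hg : HasDerivAt g g' x) :
    HasDerivAt (fun u => exp (r * u) * g u) (exp (r * x) * (g' + r * g x)) x := by
  have hexp : HasDerivAt (fun u => exp (r * u)) (exp (r * x) * r) x := by
    simpa using ((hasDerivAt_id x).const_mul r).exp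
  exact (hexp.mul hg).congr_deriv (by ring)

lemma eq_mul_exp_of_hasDerivAt_eq_mul {g : ℝ → ℝ} {r : ℝ}
    (hg : ∀ x, 0 ≤ x → HasDerivAt g (r * g x) x) :
    ∀ t, 0 ≤ t → g t = g 0 * exp (r * t) := by
  intro t ht
  have hderiv : ∀ x, 0 ≤ x → HasDerivAt (fun u => exp (-r * u) * g u) 0 x := fun x hx =>
    (hasDerivAt_exp_mul_mul (hg x hx)).congr_deriv (by ring)
  have hconst := constant_of_has_deriv_right_zero
    (fun x hx => (hderiv x hx.1).continuousAt.continuousWithinAt)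
    (fun x hx => (hderiv x hx.1).hasDerivWithinAt) t ⟨ht, le_rfl⟩
  simp only [mul_zero, exp_zero, one_mul] at hconst
  calc g t = exp (r * t) * (exp (-r * t) * g t) := by
        rw [← mul_assoc, ← exp_add, neg_mul, add_neg_cancel, exp_zero, one_mul]
    _ = g 0 * exp (r * t) := by rw [hconst, mul_comm]

lemma norm_le_of_norm_deriv_le_exp {E : Type*} [NormedAddCommGroup E] [NormedSpace ℝ E]
    {F F' : ℝ → E} {C K : ℝ} (hK : 0 < K) (hF : ∀ x, 0 ≤ x → HasDerivAt F (F' x) x)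
    (hF0 : ‖F 0‖ ≤ C / K) (hF' : ∀ x, 0 ≤ x → ‖F' x‖ ≤ C * exp (K * x)) :
    ∀ t, 0 ≤ t → ‖F t‖ ≤ C / K * exp (K * t) := by
  intro t ht
  have hB : ∀ x, HasDerivAt (fun u => C / K * exp (K * u)) (C * exp (K * x)) x := fun x =>
    (((hasDerivAt_id' x).const_mul K).exp.const_mul (C / K)).congr_deriv (by field_simp)
  simpa using image_norm_le_of_norm_deriv_right_le_deriv_boundary
    (fun x hx => (hF x hx.1).continuousAt.continuousWithinAt)
    (fun x hx => (hF x hx.1).hasDerivWithinAt) (by simpa using hF0) hB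
    (fun x hx => hF' x hx.1) ⟨ht, le_rfl⟩

lemma abs_le_of_sub_mul_eq_mul_exp {f f' : ℝ → ℝ} {a b c v : ℝ} (hac : a < c) (hbc : b ≤ c)
    (hf : ∀ x, 0 ≤ x → HasDerivAt f (f' x) x) (hf0 : f 0 = 0)
    (hlin : ∀ x, 0 ≤ x → f' x - a * f x = v * exp (b * x)) :
    ∀ t, 0 ≤ t → |f t| ≤ |v| / (c - a) * exp (c * t) := by
  intro t ht
  have hF : ∀ x, 0 ≤ x → HasDerivAt (fun u => exp (-a * u) * f u) (v * exp ((b - a) * x)) x :=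
    fun x hx => (hasDerivAt_exp_mul_mul (hf x hx)).congr_deriv (by
      rw [show f' x + -a * f x = v * exp (b * x) by linarith [hlin x hx], mul_left_comm,
        ← exp_add]
      ring_nf)
  have hF' : ∀ x, 0 ≤ x → ‖v * exp ((b - a) * x)‖ ≤ |v| * exp ((c - a) * x) := fun x hx => by
    rw [Real.norm_eq_abs, abs_mul, abs_of_pos (exp_pos _)]
    gcongr
  have hFt := norm_le_of_norm_deriv_le_exp (sub_pos.2 hac) hF
    (by simpa [hf0] using div_nonneg (abs_nonneg v) (sub_pos.2 hac).le) hF' t ht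
  rw [Real.norm_eq_abs, abs_mul, abs_of_pos (exp_pos _)] at hFt
  calc |f t| = exp (a * t) * (exp (-a * t) * |f t|) := by
        rw [← mul_assoc, ← exp_add, neg_mul, add_neg_cancel, exp_zero, one_mul]
    _ ≤ exp (a * t) * (|v| / (c - a) * exp ((c - a) * t)) := by gcongr
    _ = |v| / (c - a) * exp (c * t) := by
        rw [mul_left_comm, ← exp_add]
        ring_nf

lemma exists_roots_of_discrim_nonneg {μ α : ℝ} (hμ : 0 < μ) (hdisc : 0 ≤ 1 - 4 * μ * α) :
    ∃ a b : ℝ, μ * (a + b) = -1 ∧ μ * (a * b) = α ∧ b + α ≤ 0 ∧ 1 ≤ 4 * μ * (-α - a) := by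
  obtain ⟨s, hs0, hs2⟩ : ∃ s : ℝ, 0 ≤ s ∧ s ^ 2 = 1 - 4 * μ * α :=
    ⟨√(1 - 4 * μ * α), sqrt_nonneg _, sq_sqrt hdisc⟩
  refine ⟨(-1 - s) / (2 * μ), (-1 + s) / (2 * μ), ?_, ?_, ?_, ?_⟩
  · field_simp
    ring
  · field_simp
    linear_combination -hs2
  · have hs : s ≤ 1 - 2 * μ * α := by nlinarith [sq_nonneg (μ * α)]
    rw [div_add' _ _ _ (by positivity)]
    exact div_nonpos_of_nonpos_of_nonneg (by linarith) (by positivity)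
  · field_simp
    nlinarith

theorem stmt_3_general (μ α v : ℝ) (hμ : 0 < μ) (hdisc : 0 ≤ 1 - 4 * μ * α)
    (f f' f'' : ℝ → ℝ)
    (hf : ∀ t, 0 ≤ t → HasDerivAt f (f' t) t)
    (hf' : ∀ t, 0 ≤ t → HasDerivAt f' (f'' t) t)
    (hode : ∀ t, 0 ≤ t → μ * f'' t + f' t + α * f t = 0)
    (h0 : f 0 = 0) (h0' : f' 0 = v) :
    ∀ t, 0 ≤ t → |f t| ≤ 4 * μ * |v| * Real.exp (-(α * t)) := by
  obtain ⟨a, b, hsum, hprod, hb, ha⟩ := exists_roots_of_discrim_nonneg hμ hdisc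
  have hK : 0 < -α - a := by nlinarith
  have hg : ∀ x, 0 ≤ x → HasDerivAt (fun u => f' u - a * f u) (b * (f' x - a * f x)) x :=
    fun x hx => ((hf' x hx).sub ((hf x hx).const_mul a)).congr_deriv <|
      mul_left_cancel₀ hμ.ne' (by linear_combination hode x hx - f' x * hsum + f x * hprod)
  have hg_eq (x : ℝ) (hx : 0 ≤ x) : f' x - a * f x = v * exp (b * x) := by
    simpa [h0, h0'] using eq_mul_exp_of_hasDerivAt_eq_mul hg x hx
  intro t ht
  calc |f t| ≤ |v| / (-α - a) * exp (-α * t) :=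
        abs_le_of_sub_mul_eq_mul_exp (by linarith) (by linarith) hf h0 hg_eq t ht
    _ ≤ 4 * μ * |v| * exp (-(α * t)) := by
        rw [neg_mul]
        gcongr ?_ * _
        rw [div_le_iff₀ hK]
        nlinarith [abs_nonneg v]

/-- Overdamped oscillator μ f'' + f' + α f = 0 (1 - 4μα ≥ 0), f(0)=0, f'(0)=v:
    bound |f(t)| ≤ 4 μ |v| e^{-α t}. -/
theorem stmt_3 (μ α v : ℝ) (hμ : 0 < μ) (hα : 0 < α) (hdisc : 0 ≤ 1 - 4 * μ * α)
    (f f' f'' : ℝ → ℝ)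
    (hf : ∀ t, 0 ≤ t → HasDerivAt f (f' t) t)
    (hf' : ∀ t, 0 ≤ t → HasDerivAt f' (f'' t) t)
    (hode : ∀ t, 0 ≤ t → μ * f'' t + f' t + α * f t = 0)
    (h0 : f 0 = 0) (h0' : f' 0 = v) :
    ∀ t, 0 ≤ t → |f t| ≤ 4 * μ * |v| * Real.exp (-(α * t)) :=
  stmt_3_general μ α v hμ hdisc f f' f'' hf hf' hode h0 h0'
end

section
/- Let μ > 0, α > 0 with 1 - 4μα ≥ 0, and let f solve μ f'' + f' + α f = 0 with f(0) = 0 and f'(0) = v. Then for all t ≥ 0, |f'(t)| ≤ 2 |v| e^{-α t}. -/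
/-!
Factor the characteristic polynomial as `μ r² + r + α = μ (r + a) (r + b)` with `0 < a ≤ b`.
Then `u = f' + a f` solves `u' = -b u`, so `u = v e^{-bt}`, and variation of constants gives
`f(t) = v ψ(t)` with `ψ(t) = ∫₀ᵗ e^{-a(t-s)} e^{-bs} ds ≥ 0`. Hence
`f' = u - a f = v (e^{-bt} - a ψ(t))` is `v` times a difference of two nonnegative terms, each
at most `2 e^{-αt}`: since `α = μab ≤ a`, the kernel is bounded by `e^{-αt} e^{-(b-α)s}`, so
`a ψ(t) ≤ a e^{-αt} / (b - α)`, and `a ≤ 2 (b - α)` because `b - α = μ b²` and `a ≤ b`.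
-/

open Real intervalIntegral

theorem exists_vieta_of_discrim_nonneg {μ α : ℝ} (hμ : 0 < μ) (hα : 0 < α)
    (hdisc : 0 ≤ 1 - 4 * μ * α) :
    ∃ a b : ℝ, 0 < a ∧ α ≤ a ∧ α < b ∧ a ≤ 2 * (b - α) ∧ μ * (a + b) = 1 ∧ μ * (a * b) = α := by
  set D := √(1 - 4 * μ * α)
  have hD0 : 0 ≤ D := sqrt_nonneg _
  have hDsq : D ^ 2 = 1 - 4 * μ * α := sq_sqrt hdisc
  have hD1 : D < 1 := by nlinarith [mul_pos hμ hα]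
  set a := (1 - D) / (2 * μ)
  set b := (1 + D) / (2 * μ)
  have ha : 0 < a := by apply div_pos <;> linarith
  have hab : a ≤ b := by simp only [a, b]; gcongr; linarith
  have hsum : μ * (a + b) = 1 := by simp only [a, b]; field_simp; ring
  have hprod : μ * (a * b) = α := by simp only [a, b]; field_simp; linear_combination -hDsq
  refine ⟨a, b, ha, by nlinarith [mul_pos hμ ha], by nlinarith [mul_pos hμ (ha.trans_le hab)],
    by nlinarith [mul_nonneg hμ.le (sub_nonneg.2 hab)], hsum, hprod⟩

theorem eq_exp_mul_add_integral_of_hasDerivAt {y g : ℝ → ℝ} {k : ℝ} (hg : Continuous g)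
    (hy : ∀ t, 0 ≤ t → HasDerivAt y (-k * y t + g t) t) {t : ℝ} (ht : 0 ≤ t) :
    y t = exp (-(k * t)) * (y 0 + ∫ s in 0..t, exp (k * s) * g s) := by
  set F : ℝ → ℝ := fun t => exp (k * t) * y t - ∫ s in 0..t, exp (k * s) * g s
  have hF : ∀ s, 0 ≤ s → HasDerivAt F 0 s := by
    intro s hs
    have hexp : HasDerivAt (fun s => exp (k * s)) (exp (k * s) * k) s := by
      simpa using ((hasDerivAt_id s).const_mul k).exp
    refine ((hexp.mul (hy s hs)).sub
      (((show Continuous fun s => exp (k * s) * g s by fun_prop).integral_hasStrictDerivAt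
        0 s).hasDerivAt)).congr_deriv ?_
    ring
  have hFt : F t = F 0 :=
    constant_of_has_deriv_right_zero (fun x hx => (hF x hx.1).continuousAt.continuousWithinAt)
      (fun x hx => (hF x hx.1).hasDerivWithinAt) t ⟨ht, le_rfl⟩
  simp only [F, mul_zero, exp_zero, one_mul, integral_same, sub_zero] at hFt
  rw [exp_neg]
  field_simp
  linarith

theorem integral_exp_neg_mul_le {c : ℝ} (hc : 0 < c) (t : ℝ) :
    ∫ s in 0..t, exp (-(c * s)) ≤ 1 / c := by
  have hderiv : ∀ s ∈ Set.uIcc 0 t,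
      HasDerivAt (fun s => -exp (-(c * s)) / c) (exp (-(c * s))) s := by
    intro s _
    have hexp : HasDerivAt (fun s => exp (-(c * s))) (exp (-(c * s)) * -c) s := by
      simpa using ((hasDerivAt_id s).const_mul c).neg.exp
    exact (hexp.neg.div_const c).congr_deriv (by field_simp)
  rw [integral_eq_sub_of_hasDerivAt hderiv (by apply Continuous.intervalIntegrable; fun_prop)]
  have := exp_pos (-(c * t))
  simp only [mul_zero, neg_zero, exp_zero]
  rw [div_sub_div_same, div_le_div_iff_of_pos_right hc]
  linarith

theorem exp_neg_mul_integral_le {a b α t : ℝ} (hαa : α ≤ a) (hαb : α < b) (ht : 0 ≤ t) :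
    exp (-(a * t)) * ∫ s in 0..t, exp (a * s) * exp (-(b * s)) ≤ exp (-(α * t)) / (b - α) := by
  have hbα : 0 < b - α := sub_pos.2 hαb
  calc exp (-(a * t)) * ∫ s in 0..t, exp (a * s) * exp (-(b * s))
      = ∫ s in 0..t, exp (-(a * t)) * (exp (a * s) * exp (-(b * s))) :=
        (integral_const_mul _ _).symm
    _ ≤ ∫ s in 0..t, exp (-(α * t)) * exp (-((b - α) * s)) := by
        refine integral_mono_on ht (by apply Continuous.intervalIntegrable; fun_prop)
          (by apply Continuous.intervalIntegrable; fun_prop) fun s hs => ?_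
        simp only [← exp_add, exp_le_exp]
        nlinarith [hs.2]
    _ = exp (-(α * t)) * ∫ s in 0..t, exp (-((b - α) * s)) := integral_const_mul _ _
    _ ≤ exp (-(α * t)) * (1 / (b - α)) := by gcongr; exact integral_exp_neg_mul_le hbα t
    _ = exp (-(α * t)) / (b - α) := mul_one_div _ _

/-- Overdamped oscillator μ f'' + f' + α f = 0 (1 - 4μα ≥ 0), f(0)=0, f'(0)=v:
    bound |f'(t)| ≤ 2 |v| e^{-α t}. -/
theorem stmt_4 (μ α v : ℝ) (hμ : 0 < μ) (hα : 0 < α) (hdisc : 0 ≤ 1 - 4 * μ * α)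
    (f f' f'' : ℝ → ℝ)
    (hf : ∀ t, 0 ≤ t → HasDerivAt f (f' t) t)
    (hf' : ∀ t, 0 ≤ t → HasDerivAt f' (f'' t) t)
    (hode : ∀ t, 0 ≤ t → μ * f'' t + f' t + α * f t = 0)
    (h0 : f 0 = 0) (h0' : f' 0 = v) :
    ∀ t, 0 ≤ t → |f' t| ≤ 2 * |v| * Real.exp (-(α * t)) := by
  obtain ⟨a, b, ha, hαa, hαb, ha_le, hsum, hprod⟩ := exists_vieta_of_discrim_nonneg hμ hα hdisc
  have hu : ∀ t, 0 ≤ t →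
      HasDerivAt (fun s => f' s + a * f s) (-b * (f' t + a * f t) + 0) t := by
    intro t ht
    refine ((hf' t ht).add ((hf t ht).const_mul a)).congr_deriv (mul_left_cancel₀ hμ.ne' ?_)
    linear_combination hode t ht + f' t * hsum + f t * hprod
  have hu_eq : ∀ t, 0 ≤ t → f' t + a * f t = v * exp (-(b * t)) := by
    intro t ht
    simpa [h0, h0', mul_comm] using eq_exp_mul_add_integral_of_hasDerivAt continuous_const hu ht
  intro t ht
  set ψ := exp (-(a * t)) * ∫ s in 0..t, exp (a * s) * exp (-(b * s))
  have hf_eq : f t = v * ψ := by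
    have hf_lin : ∀ s, 0 ≤ s → HasDerivAt f (-a * f s + v * exp (-(b * s))) s :=
      fun s hs => (hf s hs).congr_deriv (by linarith [hu_eq s hs])
    rw [eq_exp_mul_add_integral_of_hasDerivAt (by fun_prop) hf_lin ht, h0, zero_add]
    simp only [mul_left_comm _ v, integral_const_mul]
    ring
  have hψ0 : 0 ≤ ψ :=
    mul_nonneg (exp_pos _).le (integral_nonneg ht fun s _ => by positivity)
  have haψ : a * ψ ≤ 2 * exp (-(α * t)) :=
    calc a * ψ ≤ a * (exp (-(α * t)) / (b - α)) :=
          mul_le_mul_of_nonneg_left (exp_neg_mul_integral_le hαa hαb ht) ha.le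
      _ = a / (b - α) * exp (-(α * t)) := by ring
      _ ≤ 2 * exp (-(α * t)) := by gcongr; rwa [div_le_iff₀ (sub_pos.2 hαb)]
  have hb_exp : exp (-(b * t)) ≤ exp (-(α * t)) := by gcongr
  have hf'_eq : f' t = v * (exp (-(b * t)) - a * ψ) := by linear_combination hu_eq t ht - a * hf_eq
  rw [hf'_eq, abs_mul, mul_comm 2 |v|, mul_assoc]
  gcongr
  have hb_pos := exp_pos (-(b * t))
  exact abs_sub_le_iff.2 ⟨by linarith [mul_nonneg ha.le hψ0], by linarith⟩
end

section
/- Let μ > 0, α > 0 with 1 - 4μα ≤ 0, and let f solve μ f'' + f' + α f = 0 with f(0) = 0 and f'(0) = v. Then for all t ≥ 0, |f(t)| ≤ (√(4μ)/√α) |v| e^{-t/(4μ)}. -/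
/-!
The quadratic form `E = 4μα f² + (f + 2μ f')²` is a Lyapunov function: along solutions,
`2μ E' + E = (1 - 4μα) f² - 4μ² f'²`, which is `≤ 0` in the underdamped regime. Hence
`E(t) ≤ E(0) e^{-t/(2μ)} = 4μ²v² e^{-t/(2μ)}`, and `4μα f² ≤ E` turns this into the bound
on `|f|`.
-/

open Real Set

theorem le_mul_exp_of_hasDerivAt_le_neg_mul {E E' : ℝ → ℝ} {k : ℝ}
    (hE : ∀ t, 0 ≤ t → HasDerivAt E (E' t) t) (hdecay : ∀ t, 0 ≤ t → E' t ≤ -k * E t)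
    {t : ℝ} (ht : 0 ≤ t) : E t ≤ E 0 * exp (-k * t) := by
  have hg : ∀ s, 0 ≤ s →
      HasDerivAt (fun s => E s * exp (k * s)) ((E' s + k * E s) * exp (k * s)) s := by
    intro s hs
    have hexp : HasDerivAt (fun s => exp (k * s)) (exp (k * s) * k) s := by
      simpa using ((hasDerivAt_id s).const_mul k).exp
    exact ((hE s hs).fun_mul hexp).congr_deriv (by ring)
  have hanti : AntitoneOn (fun s => E s * exp (k * s)) (Ici 0) := by
    refine antitoneOn_of_hasDerivWithinAt_nonpos
      (f' := fun s => (E' s + k * E s) * exp (k * s)) (convex_Ici 0)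
      (fun s hs => (hg s hs).continuousAt.continuousWithinAt) (fun s hs => ?_) (fun s hs => ?_)
    all_goals rw [interior_Ici] at hs
    · exact (hg s hs.le).hasDerivWithinAt
    · have := hdecay s hs.le
      exact mul_nonpos_of_nonpos_of_nonneg (by linarith) (exp_pos _).le
  have hgt : E t * exp (k * t) ≤ E 0 := by simpa using hanti self_mem_Ici ht ht
  calc E t = E t * exp (k * t) * exp (-k * t) := by
        rw [mul_assoc, ← exp_add, neg_mul, add_neg_cancel, exp_zero, mul_one]
    _ ≤ E 0 * exp (-k * t) := by gcongr

def dampedEnergy (μ α x y : ℝ) : ℝ := 4 * μ * α * x ^ 2 + (x + 2 * μ * y) ^ 2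

theorem hasDerivAt_dampedEnergy {μ α t : ℝ} {f f' : ℝ → ℝ} {x' y' : ℝ}
    (hf : HasDerivAt f x' t) (hf' : HasDerivAt f' y' t) :
    HasDerivAt (fun s => dampedEnergy μ α (f s) (f' s))
      (2 * (4 * μ * α * f t * x' + (f t + 2 * μ * f' t) * (x' + 2 * μ * y'))) t := by
  unfold dampedEnergy
  exact (((hf.fun_pow 2).const_mul (4 * μ * α)).fun_add
    ((hf.fun_add (hf'.const_mul (2 * μ))).fun_pow 2)).congr_deriv (by push_cast; ring)

theorem dampedEnergy_deriv_le {μ α x y z : ℝ} (hμ : 0 < μ) (hdisc : 1 - 4 * μ * α ≤ 0)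
    (hode : μ * z + y + α * x = 0) :
    2 * (4 * μ * α * x * y + (x + 2 * μ * y) * (y + 2 * μ * z))
      ≤ -(1 / (2 * μ)) * dampedEnergy μ α x y := by
  have key : 2 * μ * (2 * (4 * μ * α * x * y + (x + 2 * μ * y) * (y + 2 * μ * z)))
      + dampedEnergy μ α x y = (1 - 4 * μ * α) * x ^ 2 - 4 * μ ^ 2 * y ^ 2 := by
    have hz : μ * z = -y - α * x := by linarith
    unfold dampedEnergy
    linear_combination (8 * μ * x + 16 * μ ^ 2 * y) * hz
  have hnonpos : (1 - 4 * μ * α) * x ^ 2 - 4 * μ ^ 2 * y ^ 2 ≤ 0 := by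
    nlinarith [mul_nonpos_of_nonpos_of_nonneg hdisc (sq_nonneg x), sq_nonneg (μ * y)]
  rw [neg_mul, le_neg, one_div, inv_mul_eq_div, div_le_iff₀ (by positivity)]
  linarith

/-- Underdamped oscillator μ f'' + f' + α f = 0 (1 - 4μα ≤ 0), f(0)=0, f'(0)=v:
    bound |f(t)| ≤ (√(4μ)/√α) |v| e^{-t/(4μ)}. -/
theorem stmt_5 (μ α v : ℝ) (hμ : 0 < μ) (hα : 0 < α) (hdisc : 1 - 4 * μ * α ≤ 0)
    (f f' f'' : ℝ → ℝ)
    (hf : ∀ t, 0 ≤ t → HasDerivAt f (f' t) t)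
    (hf' : ∀ t, 0 ≤ t → HasDerivAt f' (f'' t) t)
    (hode : ∀ t, 0 ≤ t → μ * f'' t + f' t + α * f t = 0)
    (h0 : f 0 = 0) (h0' : f' 0 = v) :
    ∀ t, 0 ≤ t →
      |f t| ≤ Real.sqrt (4 * μ) / Real.sqrt α * |v| * Real.exp (-(t / (4 * μ))) := by
  intro t ht
  have hdecay :
      dampedEnergy μ α (f t) (f' t) ≤ 4 * μ ^ 2 * v ^ 2 * exp (-(1 / (2 * μ)) * t) := by
    have := le_mul_exp_of_hasDerivAt_le_neg_mul
      (fun s hs => hasDerivAt_dampedEnergy (μ := μ) (α := α) (hf s hs) (hf' s hs))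
      (fun s hs => dampedEnergy_deriv_le hμ hdisc (hode s hs)) ht
    rwa [show dampedEnergy μ α (f 0) (f' 0) = 4 * μ ^ 2 * v ^ 2 by
      simp only [dampedEnergy, h0, h0']; ring] at this
  have hexp : exp (-(t / (4 * μ))) ^ 2 = exp (-(1 / (2 * μ)) * t) := by
    rw [← exp_nat_mul]; congr 1; field_simp; ring
  have hbound_sq : (√(4 * μ) / √α * |v| * exp (-(t / (4 * μ)))) ^ 2
      = 4 * μ / α * v ^ 2 * exp (-(1 / (2 * μ)) * t) := by
    rw [mul_pow, mul_pow, div_pow, sq_sqrt (by positivity), sq_sqrt hα.le, sq_abs, hexp]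
  refine abs_le_of_sq_le_sq ?_ (by positivity)
  rw [hbound_sq, div_mul_eq_mul_div, div_mul_eq_mul_div, le_div_iff₀ hα]
  have henergy : 4 * μ * α * f t ^ 2 ≤ dampedEnergy μ α (f t) (f' t) :=
    le_add_of_nonneg_right (sq_nonneg _)
  nlinarith [henergy.trans hdecay,
    mul_nonneg (mul_nonneg hμ.le (sq_nonneg v)) (exp_pos (-(1 / (2 * μ)) * t)).le]
end

section
/- Let μ > 0, α > 0 with 1 - 4μα ≤ 0, and let f solve μ f'' + f' + α f = 0 with f(0) = 0 and f'(0) = v. Then for all t ≥ 0, |f'(t)| ≤ 2 |v| e^{-t/(4μ)}. -/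
/-- Underdamped oscillator μ f'' + f' + α f = 0 (1 - 4μα ≤ 0), f(0)=0, f'(0)=v:
    bound |f'(t)| ≤ 2 |v| e^{-t/(4μ)}. -/
theorem stmt_6 (μ α v : ℝ) (hμ : 0 < μ) (hα : 0 < α) (hdisc : 1 - 4 * μ * α ≤ 0)
    (f f' f'' : ℝ → ℝ)
    (hf : ∀ t, 0 ≤ t → HasDerivAt f (f' t) t)
    (hf' : ∀ t, 0 ≤ t → HasDerivAt f' (f'' t) t)
    (hode : ∀ t, 0 ≤ t → μ * f'' t + f' t + α * f t = 0)
    (h0 : f 0 = 0) (h0' : f' 0 = v) :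
    ∀ t, 0 ≤ t → |f' t| ≤ 2 * |v| * Real.exp (-(t / (4 * μ))) := by
  set E : ℝ → ℝ := fun s => μ * f' s ^ 2 + (3/5) * (f s * f' s) + α * f s ^ 2 with hE
  set G : ℝ → ℝ := fun s => E s * Real.exp (s / (2 * μ)) with hG
  have hGderiv : ∀ s, 0 ≤ s → HasDerivAt G
      ((μ * (2 * f' s ^ 1 * f'' s) + (3/5) * (f' s * f' s + f s * f'' s)
        + α * (2 * f s ^ 1 * f' s)) * Real.exp (s / (2 * μ))
       + E s * (Real.exp (s / (2 * μ)) * (1 / (2 * μ)))) s := by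
    intro s hs
    have h1 : HasDerivAt (fun s => f' s ^ 2) (2 * f' s ^ 1 * f'' s) s := (hf' s hs).pow 2
    have h2 : HasDerivAt (fun s => f s * f' s) (f' s * f' s + f s * f'' s) s :=
      (hf s hs).mul (hf' s hs)
    have h3 : HasDerivAt (fun s => f s ^ 2) (2 * f s ^ 1 * f' s) s := (hf s hs).pow 2
    have hEd : HasDerivAt E
        (μ * (2 * f' s ^ 1 * f'' s) + (3/5) * (f' s * f' s + f s * f'' s)
          + α * (2 * f s ^ 1 * f' s)) s :=
      ((h1.const_mul μ).add (h2.const_mul (3/5))).add (h3.const_mul α)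
    have hexp : HasDerivAt (fun s : ℝ => Real.exp (s / (2 * μ)))
        (Real.exp (s / (2 * μ)) * (1 / (2 * μ))) s :=
      ((hasDerivAt_id s).div_const (2 * μ)).exp
    exact hEd.mul hexp
  have hanti : AntitoneOn G (Set.Ici 0) := by
    apply antitoneOn_of_deriv_nonpos (convex_Ici 0)
    · exact fun s hs => ((hGderiv s hs).continuousAt).continuousWithinAt
    · intro s hs
      rw [interior_Ici] at hs
      exact ((hGderiv s (le_of_lt hs)).differentiableAt).differentiableWithinAt
    · intro s hs
      rw [interior_Ici] at hs
      have hs' : (0:ℝ) ≤ s := le_of_lt hs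
      rw [(hGderiv s hs').deriv]
      have hodeX := hode s hs'
      have hexp_pos : 0 < Real.exp (s / (2 * μ)) := Real.exp_pos _
      have hquad : 0 ≤ 9 * μ * (f' s)^2 + 3 * (f s * f' s) + α * (f s)^2 := by
        nlinarith [sq_nonneg (6 * μ * f' s + f s),
          mul_nonneg (by nlinarith : (0:ℝ) ≤ 4 * μ * α - 1) (sq_nonneg (f s)), hμ]
      set A : ℝ := μ * (2 * f' s ^ 1 * f'' s) + (3/5) * (f' s * f' s + f s * f'' s)
        + α * (2 * f s ^ 1 * f' s) with hA
      have hid : 2 * μ^2 * A + μ * E s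
          = -(1/5) * μ * (9 * μ * (f' s)^2 + 3 * (f s * f' s) + α * (f s)^2) := by
        simp only [hA, hE]
        linear_combination (4 * μ^2 * f' s + (6/5) * μ * f s) * hodeX
      have hkey : A + E s * (1 / (2 * μ)) ≤ 0 := by
        have h9 : 2 * μ^2 * A + μ * E s ≤ 0 := by rw [hid]; nlinarith [mul_nonneg hμ.le hquad]
        have h10 : A + E s * (1 / (2 * μ)) = (2 * μ^2 * A + μ * E s) / (2 * μ^2) := by
          field_simp
        rw [h10]
        exact div_nonpos_of_nonpos_of_nonneg h9 (by positivity)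
      nlinarith [mul_le_mul_of_nonneg_right hkey hexp_pos.le]
  intro t ht
  have hGle : G t ≤ G 0 := hanti (Set.self_mem_Ici) ht ht
  have hG0 : G 0 = μ * v^2 := by simp [hG, hE, h0, h0']
  have hEt : E t * Real.exp (t / (2 * μ)) ≤ μ * v^2 := by rw [← hG0]; exact hGle
  have hE4 : μ * (f' t)^2 ≤ 4 * E t := by
    simp only [hE]
    nlinarith [sq_nonneg (4 * α * f t + (6/5) * f' t),
      mul_nonneg (by nlinarith : (0:ℝ) ≤ 12 * μ * α - 36/25) (sq_nonneg (f' t)), hα]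
  have hexp_pos : 0 < Real.exp (t / (2 * μ)) := Real.exp_pos _
  have h7 : (f' t)^2 * Real.exp (t / (2 * μ)) ≤ 4 * v^2 := by
    have h6 : μ * ((f' t)^2 * Real.exp (t / (2 * μ))) ≤ μ * (4 * v^2) := by
      nlinarith [mul_le_mul_of_nonneg_right hE4 hexp_pos.le, hEt]
    exact le_of_mul_le_mul_left h6 hμ
  have h5 : (f' t)^2 ≤ 4 * v^2 * Real.exp (-(t / (2 * μ))) := by
    rw [Real.exp_neg, mul_comm (4 * v^2) _, ← div_eq_inv_mul, le_div_iff₀ hexp_pos]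
    exact h7
  have hR : (2 * |v| * Real.exp (-(t / (4 * μ))))^2 = 4 * v^2 * Real.exp (-(t / (2 * μ))) := by
    have hh : Real.exp (-(t / (4 * μ)))^2 = Real.exp (-(t / (2 * μ))) := by
      rw [sq, ← Real.exp_add]
      congr 1
      field_simp
      ring
    rw [mul_pow, mul_pow, sq_abs, hh]
    ring
  calc |f' t| = Real.sqrt ((f' t)^2) := (Real.sqrt_sq_eq_abs _).symm
    _ ≤ Real.sqrt ((2 * |v| * Real.exp (-(t / (4 * μ))))^2) :=
        Real.sqrt_le_sqrt (by rw [hR]; exact h5)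
    _ = 2 * |v| * Real.exp (-(t / (4 * μ))) := Real.sqrt_sq (by positivity)
end

section
/- Let μ > 0, α > 0, and let f solve μ f'' + f' + α f = 0 with f(0) = 0 and f'(0) = 1/μ. Define, for a Hilbert space H with orthonormal basis (e_k) and eigenvalue sequence (α_k), the operator T(t) on H by T(t) e_k = f_k(t) e_k where f_k solves μ f_k'' + f_k' + α_k f_k = 0, f_k(0)=0, f_k'(0)=1/μ. Then for every t ≥ 0, the operator norm ‖T(t)‖_{L(H)} ≤ 4. -/
/-!
Each `f_k` is bounded by `1` on `[0, ∞)`. Along a solution of `μ f'' + f' + α f = 0` the energy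
`(f + μ f')² + μ α f²` has derivative `-2 α f² ≤ 0`; it equals `1` at `t = 0`, so
`|f + μ f'| ≤ 1` for all `t ≥ 0`. Since `f(0) = 0`, the first-order comparison
`(e^{t/μ} (1 ∓ f))' = e^{t/μ} (1 ∓ (f + μ f')) / μ ≥ 0` then gives `|f| ≤ 1`.
A diagonal operator in a Hilbert basis is bounded by the supremum of its diagonal entries, so
`‖T(t)‖ ≤ 1 ≤ 4`.
-/

open Set

lemma monotoneOn_Ici_of_hasDerivAt_nonneg {F F' : ℝ → ℝ} {a : ℝ}
    (hF : ∀ t, a ≤ t → HasDerivAt F (F' t) t) (hF' : ∀ t, a ≤ t → 0 ≤ F' t) :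
    MonotoneOn F (Ici a) :=
  monotoneOn_of_hasDerivWithinAt_nonneg (f' := F') (convex_Ici a)
    (fun t ht => (hF t ht).continuousAt.continuousWithinAt)
    (fun t ht => (hF t (interior_subset ht)).hasDerivWithinAt)
    (fun t ht => hF' t (interior_subset ht))

lemma le_of_add_mul_deriv_le {μ M : ℝ} {g g' : ℝ → ℝ} (hμ : 0 < μ)
    (hg : ∀ t, 0 ≤ t → HasDerivAt g (g' t) t) (hb : ∀ t, 0 ≤ t → g t + μ * g' t ≤ M)
    (h0 : g 0 ≤ M) (t : ℝ) (ht : 0 ≤ t) : g t ≤ M := by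
  set F : ℝ → ℝ := fun t => Real.exp (t / μ) * (M - g t)
  have hF : ∀ t, 0 ≤ t → HasDerivAt F (Real.exp (t / μ) / μ * (M - (g t + μ * g' t))) t := by
    intro t ht
    refine ((((hasDerivAt_id t).div_const μ).exp).mul
      ((hasDerivAt_const t M).sub (hg t ht))).congr_deriv ?_
    simp only [id, Pi.sub_apply]
    field_simp
    ring
  have hmono : MonotoneOn F (Ici 0) := monotoneOn_Ici_of_hasDerivAt_nonneg hF
    fun t ht => mul_nonneg (by positivity) (sub_nonneg.2 (hb t ht))
  have hFt : M - g 0 ≤ Real.exp (t / μ) * (M - g t) := by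
    simpa [F] using hmono self_mem_Ici ht ht
  nlinarith [Real.exp_pos (t / μ)]

section DampedOscillator

variable {μ a : ℝ} {f f' f'' : ℝ → ℝ}

lemma dampedOscillator_energy_le (ha : 0 ≤ a)
    (hf : ∀ t, 0 ≤ t → HasDerivAt f (f' t) t) (hf' : ∀ t, 0 ≤ t → HasDerivAt f' (f'' t) t)
    (hode : ∀ t, 0 ≤ t → μ * f'' t + f' t + a * f t = 0) (t : ℝ) (ht : 0 ≤ t) :
    (f t + μ * f' t) ^ 2 + μ * a * f t ^ 2 ≤ (f 0 + μ * f' 0) ^ 2 + μ * a * f 0 ^ 2 := by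
  have hE : ∀ t, 0 ≤ t → HasDerivAt (fun t => -((f t + μ * f' t) ^ 2 + μ * a * f t ^ 2))
      (2 * a * f t ^ 2) t := by
    intro t ht
    refine ((((hf t ht).add ((hf' t ht).const_mul μ)).pow 2).add
      (((hf t ht).pow 2).const_mul (μ * a))).neg.congr_deriv ?_
    simp only [Pi.add_apply]
    linear_combination (-2 * (f t + μ * f' t)) * hode t ht
  have hmono := monotoneOn_Ici_of_hasDerivAt_nonneg hE fun t _ => by positivity
  exact neg_le_neg_iff.1 (hmono self_mem_Ici ht ht)

lemma abs_le_one_of_dampedOscillator (hμ : 0 < μ) (ha : 0 ≤ a)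
    (hf : ∀ t, 0 ≤ t → HasDerivAt f (f' t) t) (hf' : ∀ t, 0 ≤ t → HasDerivAt f' (f'' t) t)
    (hode : ∀ t, 0 ≤ t → μ * f'' t + f' t + a * f t = 0)
    (h0 : f 0 = 0) (h0' : f' 0 = 1 / μ) (t : ℝ) (ht : 0 ≤ t) : |f t| ≤ 1 := by
  have hfirst : ∀ t, 0 ≤ t → |f t + μ * f' t| ≤ 1 := by
    intro t ht
    have hE := dampedOscillator_energy_le ha hf hf' hode t ht
    rw [h0, h0', mul_one_div_cancel hμ.ne'] at hE
    refine abs_le_of_sq_le_sq ?_ zero_le_one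
    nlinarith [mul_nonneg (mul_nonneg hμ.le ha) (sq_nonneg (f t))]
  rw [abs_le]
  constructor
  · have := le_of_add_mul_deriv_le (g := fun t => -f t) (M := 1) hμ (fun t ht => (hf t ht).neg)
      (fun t ht => by linarith [(abs_le.1 (hfirst t ht)).1]) (by simp [h0]) t ht
    linarith
  · exact le_of_add_mul_deriv_le hμ hf (fun t ht => (abs_le.1 (hfirst t ht)).2)
      (by simp [h0]) t ht

end DampedOscillator

lemma Orthonormal.norm_sum_smul_sq {ι 𝕜 E : Type*} [RCLike 𝕜] [NormedAddCommGroup E]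
    [InnerProductSpace 𝕜 E] {v : ι → E} (hv : Orthonormal 𝕜 v) (l : ι → 𝕜) (s : Finset ι) :
    ‖∑ i ∈ s, l i • v i‖ ^ 2 = ∑ i ∈ s, ‖l i‖ ^ 2 :=
  hv.orthogonalFamily.norm_sum l s

lemma HilbertBasis.opNorm_le_of_apply_eq_smul {ι 𝕜 E : Type*} [RCLike 𝕜]
    [NormedAddCommGroup E] [InnerProductSpace 𝕜 E] (b : HilbertBasis ι 𝕜 E) (T : E →L[𝕜] E)
    (c : ι → 𝕜) {C : ℝ} (hC : 0 ≤ C) (hc : ∀ i, ‖c i‖ ≤ C) (hT : ∀ i, T (b i) = c i • b i) :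
    ‖T‖ ≤ C := by
  refine T.opNorm_le_bound hC fun x => ?_
  have hclosed : IsClosed {y : E | ‖T y‖ ≤ C * ‖y‖} :=
    isClosed_le T.continuous.norm (continuous_const.mul continuous_norm)
  have hspan : (Submodule.span 𝕜 (range b) : Set E) ⊆ {y : E | ‖T y‖ ≤ C * ‖y‖} := by
    intro y hy
    obtain ⟨l, rfl⟩ := Finsupp.mem_span_range_iff_exists_finsupp.1 hy
    have hTy : T (l.sum fun i a => a • b i) = ∑ i ∈ l.support, (l i * c i) • b i := by
      simp only [Finsupp.sum, map_sum, map_smul, hT, smul_smul]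
    have hsq : ‖T (l.sum fun i a => a • b i)‖ ^ 2 ≤ (C * ‖l.sum fun i a => a • b i‖) ^ 2 := by
      rw [hTy, mul_pow, Finsupp.sum, b.orthonormal.norm_sum_smul_sq,
        b.orthonormal.norm_sum_smul_sq, Finset.mul_sum]
      gcongr with i
      rw [norm_mul, mul_pow, mul_comm]
      gcongr
      exact hc i
    exact le_of_sq_le_sq hsq (by positivity)
  exact closure_minimal hspan hclosed (by simp [← Submodule.topologicalClosure_coe, b.dense_span])

/-- Diagonal operator T(t) e_k = f_k(t) e_k, where f_k solves the damped oscillator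
    μ f_k'' + f_k' + α_k f_k = 0 with f_k(0)=0, f_k'(0)=1/μ, has norm ‖T(t)‖ ≤ 4. -/
theorem stmt_14 {H : Type*} [NormedAddCommGroup H] [InnerProductSpace ℝ H] [CompleteSpace H]
    (e : HilbertBasis ℕ ℝ H) (μ : ℝ) (hμ : 0 < μ)
    (α : ℕ → ℝ) (hα : ∀ k, 0 < α k)
    (f f' f'' : ℕ → ℝ → ℝ)
    (hf : ∀ k t, 0 ≤ t → HasDerivAt (f k) (f' k t) t)
    (hf' : ∀ k t, 0 ≤ t → HasDerivAt (f' k) (f'' k t) t)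
    (hode : ∀ k t, 0 ≤ t → μ * f'' k t + f' k t + α k * f k t = 0)
    (h0 : ∀ k, f k 0 = 0) (h0' : ∀ k, f' k 0 = 1 / μ)
    (T : ℝ → H →L[ℝ] H)
    (hT : ∀ t k, T t (e k) = f k t • e k) :
    ∀ t, 0 ≤ t → ‖T t‖ ≤ 4 := by
  intro t ht
  have hbound : ∀ k, ‖f k t‖ ≤ 1 := fun k =>
    abs_le_one_of_dampedOscillator hμ (hα k).le (hf k) (hf' k) (hode k) (h0 k) (h0' k) t ht
  calc ‖T t‖ ≤ 1 := e.opNorm_le_of_apply_eq_smul (T t) (fun k => f k t) zero_le_one hbound (hT t)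
    _ ≤ 4 := by norm_num
end
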